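/- arXiv:math/0601589 — 3 statements merged into one kernel-verified Lean document; each statement's English description precedes it below -/
import Mathlib

section
/- Let G be a group, N a normal subgroup of G, g an element of N, and C a subgroup of the centralizer of g in G. Let T be a set of representatives of the right cosets of CN in G. Then the normal closure of g in G equals the normal closure in N of the set Z = { t⁻¹ g t : t ∈ T }. -/
open Pointwise


/-- Let G be a group, N a normal subgroup of G, g ∈ N, and C a subgroup of the
centralizer of g in G. Let T be a set of right coset representatives of CN in G. Then the
normal closure of g in G equals (the image in G of) the normal closure in N of
Z = { t⁻¹ g t : t ∈ T }. -/
theorem stmt_0 {G : Type*} [Group G] (N : Subgroup G) [N.Normal] (g : G) (hg : g ∈ N)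
    (C : Subgroup G) (hC : C ≤ Subgroup.centralizer {g}) (T : Set G)
    (hT : ∀ s : G, ∃! t, t ∈ T ∧ ∃ k ∈ C ⊔ N, s = k * t) :
    Subgroup.normalClosure {g} =
      Subgroup.map N.subtype
        (Subgroup.normalClosure {z : N | ∃ t ∈ T, (z : G) = t⁻¹ * g * t}) := by
  set Z : Set N := {z : N | ∃ t ∈ T, (z : G) = t⁻¹ * g * t} with hZ
  set K : Subgroup N := Subgroup.normalClosure Z with hK
  have hgc : ∀ c ∈ C, c⁻¹ * g * c = g := by
    intro c hc
    have := hC hc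
    rw [Subgroup.mem_centralizer_iff] at this
    have h1 : g * c = c * g := this g rfl
    rw [mul_assoc, h1, ← mul_assoc, inv_mul_cancel, one_mul]
  -- membership in N for conjugates of g
  have hmemN : ∀ x : G, x⁻¹ * g * x ∈ N := by
    intro x
    have := Subgroup.Normal.conj_mem ‹N.Normal› g hg x⁻¹
    simpa using this
  -- key: conjugates of Z elements stay in K
  have key : ∀ x : G, ∀ z : N, z ∈ Z → MulAut.conjNormal x z ∈ K := by
    intro x z hzZ
    obtain ⟨t, htT, hzt⟩ := hzZ
    obtain ⟨t', ⟨ht'T, k, hkCN, hs⟩, -⟩ := hT (t * x⁻¹)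
    -- decompose k = c * n
    have hkmem : k ∈ ((C : Set G) * (N : Set G)) := by
      rw [← Subgroup.mul_normal C N]; exact hkCN
    obtain ⟨c, hc, n, hn, rfl⟩ := hkmem
    have hm : t'⁻¹ * n * t' ∈ N := by
      have := Subgroup.Normal.conj_mem ‹N.Normal› n hn t'⁻¹
      simpa using this
    set m : N := ⟨t'⁻¹ * n * t', hm⟩ with hmdef
    set z' : N := ⟨t'⁻¹ * g * t', hmemN t'⟩ with hz'def
    have hz'Z : z' ∈ Z := ⟨t', ht'T, rfl⟩
    have heq : MulAut.conjNormal x z = m⁻¹ * z' * m := by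
      apply Subtype.ext
      push_cast
      rw [MulAut.conjNormal_apply, hzt]
      have hx : t * x⁻¹ = c * n * t' := hs
      have hxi : x * t⁻¹ = (c * n * t')⁻¹ := by
        rw [← hx]; group
      calc x * (t⁻¹ * g * t) * x⁻¹
          = (x * t⁻¹) * g * (x * t⁻¹)⁻¹ := by group
        _ = (c * n * t')⁻¹ * g * (c * n * t') := by rw [hxi]; group
        _ = t'⁻¹ * n⁻¹ * (c⁻¹ * g * c) * n * t' := by group
        _ = t'⁻¹ * n⁻¹ * g * n * t' := by rw [hgc c hc]
        _ = (t'⁻¹ * n * t')⁻¹ * (t'⁻¹ * g * t') * (t'⁻¹ * n * t') := by group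
    rw [heq]
    have hz'K : z' ∈ K := Subgroup.subset_normalClosure hz'Z
    have hnorm : K.Normal := Subgroup.normalClosure_normal
    have := hnorm.conj_mem z' hz'K m⁻¹
    simpa [mul_assoc] using this
  -- K is stable under conjNormal
  have stable : ∀ x : G, ∀ k ∈ K, MulAut.conjNormal x k ∈ K := by
    intro x
    have : K ≤ Subgroup.comap (MulAut.conjNormal x).toMonoidHom K := by
      have : (Subgroup.comap (MulAut.conjNormal x).toMonoidHom K).Normal :=
        Subgroup.Normal.comap Subgroup.normalClosure_normal _
      exact Subgroup.normalClosure_le_normal (fun z hz => key x z hz)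
    intro k hk
    exact this hk
  have hHnormal : (Subgroup.map N.subtype K).Normal := by
    constructor
    intro h hh x
    obtain ⟨k, hk, rfl⟩ := hh
    refine ⟨MulAut.conjNormal x k, stable x k hk, ?_⟩
    simp [MulAut.conjNormal_apply, Subgroup.coe_subtype]
  have hgH : g ∈ Subgroup.map N.subtype K := by
    obtain ⟨t, ⟨htT, k, hkCN, hs⟩, -⟩ := hT 1
    have ht : t ∈ C ⊔ N := by
      have hkt : k * t = 1 := hs.symm
      rw [eq_inv_of_mul_eq_one_right hkt]
      exact inv_mem hkCN
    have htmem : t ∈ ((C : Set G) * (N : Set G)) := by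
      rw [← Subgroup.mul_normal C N]; exact ht
    obtain ⟨c, hc, n, hn, rfl⟩ := htmem
    set z' : N := ⟨(c * n)⁻¹ * g * (c * n), hmemN (c * n)⟩ with hz'def
    have hz'Z : z' ∈ Z := ⟨c * n, htT, rfl⟩
    have hz'K : z' ∈ K := Subgroup.subset_normalClosure hz'Z
    have hnorm : K.Normal := Subgroup.normalClosure_normal
    have hcon : (⟨n, hn⟩ : N) * z' * (⟨n, hn⟩ : N)⁻¹ ∈ K := hnorm.conj_mem z' hz'K ⟨n, hn⟩
    refine ⟨_, hcon, ?_⟩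
    show (((⟨n, hn⟩ : N) * z' * (⟨n, hn⟩ : N)⁻¹ : N) : G) = g
    push_cast
    calc n * ((c * n)⁻¹ * g * (c * n)) * n⁻¹
        = c⁻¹ * g * c := by group
      _ = g := hgc c hc
  apply le_antisymm
  · exact Subgroup.normalClosure_le_normal (by simpa using hgH)
  · rw [Subgroup.map_le_iff_le_comap]
    have : (Subgroup.comap N.subtype (Subgroup.normalClosure {g})).Normal :=
      Subgroup.Normal.comap Subgroup.normalClosure_normal _
    apply Subgroup.normalClosure_le_normal
    rintro z ⟨t, htT, hzt⟩
    show (z : G) ∈ Subgroup.normalClosure {g}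
    rw [hzt]
    have := Subgroup.normalClosure_normal.conj_mem g
      (Subgroup.subset_normalClosure (Set.mem_singleton g)) t⁻¹
    simpa using this
end

section
/- Let π = (p₁, p₂, …) be a sequence of pairwise distinct primes and Q a periodic group with a normal series Q = Q₀ ⊵ Q₁ ⊵ … , ⋂ Q_i = {1}, with Q_{i−1}/Q_i trivial or abelian of exponent p_i. Then every element x ∈ Q has square-free order; more precisely, the order of x is a product of distinct primes from the sequence π, and if x ∈ Q_i then all these primes occur with index > i. -/
/-- If y has finite order coprime to q and y^q ∈ H, then y ∈ H. -/
lemma aux_coprime_pow_mem {G : Type*} [Group G] {y : G} {q : ℕ} (H : Subgroup G)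
    (hfin : IsOfFinOrder y) (hcop : Nat.Coprime q (orderOf y)) (h : y ^ q ∈ H) : y ∈ H := by
  set n := orderOf y with hn
  have hnpos : 0 < n := hfin.orderOf_pos
  have ht : 1 ≤ Nat.totient n := Nat.totient_pos.mpr hnpos
  have hmod : q ^ Nat.totient n ≡ 1 [MOD n] := Nat.ModEq.pow_totient hcop
  have : y ^ (q ^ Nat.totient n) = y ^ 1 := by
    rw [pow_eq_pow_iff_modEq]; exact hmod
  rw [pow_one] at this
  have hy : y = (y ^ q) ^ (q ^ (Nat.totient n - 1)) := by
    rw [← pow_mul]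
    have h2 : q * q ^ (Nat.totient n - 1) = q ^ (Nat.totient n - 1 + 1) :=
      (pow_succ' q (Nat.totient n - 1)).symm
    rw [h2, show Nat.totient n - 1 + 1 = Nat.totient n by omega]
    exact this.symm
  rw [hy]
  exact pow_mem h _

lemma aux_squarefree_prod (p : ℕ → ℕ) (s : Finset ℕ)
    (hpr : ∀ j ∈ s, (p j).Prime) (hinj : ∀ j ∈ s, ∀ k ∈ s, p j = p k → j = k) :
    Squarefree (∏ j ∈ s, p j) := by
  classical
  induction s using Finset.induction with
  | empty => simpa using squarefree_one
  | @insert a s hnot ih =>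
    rw [Finset.prod_insert hnot]
    have hcop : Nat.Coprime (p a) (∏ j ∈ s, p j) := by
      apply Nat.Coprime.prod_right
      intro k hk
      rw [Nat.coprime_primes (hpr a (by simp)) (hpr k (by simp [hk]))]
      intro he
      exact hnot (hinj a (by simp) k (by simp [hk]) he ▸ hk)
    rw [Nat.squarefree_mul hcop]
    exact ⟨(hpr a (by simp)).squarefree,
      ih (fun j hj => hpr j (by simp [hj])) (fun j hj k hk => hinj j (by simp [hj]) k (by simp [hk]))⟩

/-- If π = (p₁, p₂, …) consists of pairwise distinct primes and Q is a
periodic π-graded group (series Q = Q₀ ⊵ Q₁ ⊵ …, ⋂ Q_i = {1}, Q_i/Q_{i+1} trivial or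
abelian of exponent p_{i+1}), then every x ∈ Q has squarefree order, the order is a product
of primes from π, and if x ∈ Q_i then every prime p_j dividing the order has j > i.
(The sequence p is 1-indexed: p 0 is unused.) -/
theorem stmt_14 {G : Type*} [Group G] (p : ℕ → ℕ)
    (hp : ∀ i, 1 ≤ i → (p i).Prime) (hdist : ∀ i j, 1 ≤ i → 1 ≤ j → p i = p j → i = j)
    (hper : ∀ x : G, IsOfFinOrder x)
    (Q : ℕ → Subgroup G)
    (hQ0 : Q 0 = ⊤) (hnorm : ∀ i, (Q i).Normal) (hdesc : ∀ i, Q (i + 1) ≤ Q i)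
    (hint : (⨅ i, Q i) = ⊥)
    (hcomm : ∀ i, ∀ x ∈ Q i, ∀ y ∈ Q i, x * y * x⁻¹ * y⁻¹ ∈ Q (i + 1))
    (hpow : ∀ i, ∀ x ∈ Q i, x ^ p (i + 1) ∈ Q (i + 1)) :
    ∀ x : G, Squarefree (orderOf x) ∧
      (∀ q : ℕ, q.Prime → q ∣ orderOf x → ∃ j, 1 ≤ j ∧ p j = q) ∧
      (∀ i, x ∈ Q i → ∀ j, 1 ≤ j → p j ∣ orderOf x → i < j) := by
  classical
  have hanti : Antitone Q := antitone_nat_of_succ_le hdesc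
  -- master lemma
  have key : ∀ (x : G) (i : ℕ), x ∈ Q i →
      ∃ K, i ≤ K ∧ orderOf x ∣ ∏ j ∈ Finset.Ioc i K, p j := by
    intro x i hx
    set n := orderOf x with hn
    have hnpos : 0 < n := (hper x).orderOf_pos
    -- the set of indices j ≥ 1 with p j ∣ n is finite
    have hfinT : {j : ℕ | 1 ≤ j ∧ p j ∣ n}.Finite := by
      apply Set.Finite.of_finite_image (f := p)
      · apply Set.Finite.subset (Set.Finite.ofFinset n.primeFactors (fun q => Iff.rfl))
        rintro q ⟨j, ⟨hj1, hjd⟩, rfl⟩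
        exact Nat.mem_primeFactors.mpr ⟨hp j hj1, hjd, by omega⟩
      · intro a ha b hb hab
        exact hdist a b ha.1 hb.1 hab
    obtain ⟨K0, hK0⟩ := hfinT.bddAbove
    set K := max i K0 with hK
    refine ⟨K, le_max_left _ _, ?_⟩
    -- step induction: x ^ prod ∈ Q (i+k)
    have step : ∀ k, x ^ (∏ j ∈ Finset.Ioc i (i + k), p j) ∈ Q (i + k) := by
      intro k
      induction k with
      | zero => simpa using hx
      | succ k ih =>
        have := hpow (i + k) _ ih
        rw [← pow_mul] at this
        rw [show i + (k+1) = (i+k) + 1 from rfl,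
          Finset.prod_Ioc_succ_top (by omega : i ≤ i + k), pow_mul] at *
        exact hpow (i + k) _ ih
    have hxm := step (K - i)
    rw [show i + (K - i) = K by omega] at hxm
    set m := ∏ j ∈ Finset.Ioc i K, p j with hm
    have hord : orderOf (x ^ m) ∣ n := orderOf_pow_dvd m
    have step2 : ∀ d, x ^ m ∈ Q (K + d) := by
      intro d
      induction d with
      | zero => simpa using hxm
      | succ d ih =>
        apply aux_coprime_pow_mem _ ((hper x).pow) _ (hpow (K + d) _ ih)
        apply Nat.Coprime.coprime_dvd_right hord
        apply (hp (K + d + 1) (by omega)).coprime_iff_not_dvd.mpr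
        intro hdvd
        have : K + d + 1 ∈ {j : ℕ | 1 ≤ j ∧ p j ∣ n} := ⟨by omega, hdvd⟩
        have := hK0 this
        omega
    have hxm1 : x ^ m = 1 := by
      have : x ^ m ∈ ⨅ j, Q j := by
        rw [Subgroup.mem_iInf]
        intro j
        rcases le_or_gt j K with h | h
        · exact hanti h hxm
        · have := step2 (j - K)
          rw [show K + (j - K) = j by omega] at this
          exact this
      rwa [hint, Subgroup.mem_bot] at this
    exact orderOf_dvd_of_pow_eq_one hxm1
  intro x
  have hxtop : x ∈ Q 0 := by rw [hQ0]; trivial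
  obtain ⟨K, _, hdvd⟩ := key x 0 hxtop
  have hsq : Squarefree (∏ j ∈ Finset.Ioc 0 K, p j) := by
    apply aux_squarefree_prod
    · intro j hj; exact hp j (Finset.mem_Ioc.mp hj).1
    · intro j hj k hk; exact hdist j k (Finset.mem_Ioc.mp hj).1 (Finset.mem_Ioc.mp hk).1
  refine ⟨hsq.squarefree_of_dvd hdvd, ?_, ?_⟩
  · intro q hq hqd
    have : q ∣ ∏ j ∈ Finset.Ioc 0 K, p j := hqd.trans hdvd
    obtain ⟨j, hj, hjd⟩ := (Nat.Prime.prime hq).exists_mem_finset_dvd this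
    have hjm := Finset.mem_Ioc.mp hj
    exact ⟨j, hjm.1, ((Nat.prime_dvd_prime_iff_eq hq (hp j hjm.1)).mp hjd).symm⟩
  · intro i hxi j hj hjd
    obtain ⟨K', _, hdvd'⟩ := key x i hxi
    have : p j ∣ ∏ l ∈ Finset.Ioc i K', p l := hjd.trans hdvd'
    obtain ⟨l, hl, hld⟩ := (Nat.Prime.prime (hp j hj)).exists_mem_finset_dvd this
    have hlm := Finset.mem_Ioc.mp hl
    have : j = l := hdist j l hj (by omega) ((Nat.prime_dvd_prime_iff_eq (hp j hj) (hp l (by omega))).mp hld)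
    omega
end

section
/- Let π = (p_i) be a sequence of pairwise distinct primes and Q a periodic π-graded group with series (Q_i). Then every quotient of Q is π-graded: if N ⊴ Q and Q̄ = Q/N, then the images Q̄_i of Q_i in Q̄ form a normal series with trivial intersection and quotients trivial or abelian of exponent p_i. -/
/-- Key lemma: in a π-graded periodic group, an element of `Q i` has order dividing a
product of the primes `p (i+1+s)`. -/
lemma stmt16_key {G : Type*} [Group G] (p : ℕ → ℕ) (Q : ℕ → Subgroup G)
    (hdesc : ∀ i, Q (i + 1) ≤ Q i) (hint : (⨅ i, Q i) = ⊥)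
    (hpow : ∀ i, ∀ x ∈ Q i, x ^ p (i + 1) ∈ Q (i + 1))
    {i : ℕ} {g : G} (hg : g ∈ Q i) (hm : 0 < orderOf g) :
    ∃ T, orderOf g ∣ ∏ s ∈ Finset.range T, p (i + 1 + s) := by
  set m := orderOf g with hmdef
  set M : ℕ → ℕ := fun t => ∏ s ∈ Finset.range t, p (i + 1 + s) with hM
  have hdesc' : ∀ j k, j ≤ k → Q k ≤ Q j := by
    intro j k h
    induction h with
    | refl => exact le_rfl
    | step h ih => exact le_trans (hdesc _) ih
  have hMdvd : ∀ t t', t ≤ t' → M t ∣ M t' := by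
    intro t t' h
    induction h with
    | refl => exact dvd_rfl
    | @step k h ih =>
      refine dvd_trans ih ?_
      simp only [hM, Finset.prod_range_succ]
      exact Dvd.intro _ rfl
  -- g ^ (M t) ∈ Q (i + t)
  have hA : ∀ t, g ^ (M t) ∈ Q (i + t) := by
    intro t
    induction t with
    | zero =>
      have : M 0 = 1 := by simp [hM]
      rw [this, pow_one, Nat.add_zero]; exact hg
    | succ t ih =>
      have h1 := hpow (i + t) _ ih
      rw [← pow_mul] at h1
      have e1 : i + t + 1 = i + 1 + t := by omega
      rw [e1] at h1
      have heq : M t * p (i + 1 + t) = M (t + 1) := by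
        simp only [hM]
        exact (Finset.prod_range_succ _ _).symm
      rw [heq] at h1
      have e2 : i + 1 + t = i + (t + 1) := by omega
      rw [e2] at h1
      exact h1
  -- g ^ gcd m (M t) ∈ Q (i + t)
  have hB : ∀ t, g ^ (Nat.gcd m (M t)) ∈ Q (i + t) := by
    intro t
    have hbez := Nat.gcd_eq_gcd_ab m (M t)
    have : (g : G) ^ ((Nat.gcd m (M t) : ℤ)) =
        (g ^ (m : ℤ)) ^ (Nat.gcdA m (M t)) * (g ^ ((M t : ℤ))) ^ (Nat.gcdB m (M t)) := by
      rw [← zpow_mul, ← zpow_mul, ← zpow_add, ← hbez]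
    rw [zpow_natCast] at this
    have hgm : g ^ (m : ℤ) = 1 := by
      rw [zpow_natCast, hmdef, pow_orderOf_eq_one]
    rw [hgm, one_zpow, one_mul] at this
    rw [this]
    have : g ^ ((M t : ℤ)) ∈ Q (i + t) := by
      rw [zpow_natCast]; exact hA t
    exact Subgroup.zpow_mem _ this _
  set d : ℕ → ℕ := fun t => Nat.gcd m (M t) with hd
  have hdpos : ∀ t, 0 < d t := fun t => Nat.gcd_pos_of_pos_left _ hm
  have hdle : ∀ t, d t ≤ m := fun t => Nat.le_of_dvd hm (Nat.gcd_dvd_left _ _)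
  have hddvd : ∀ t t', t ≤ t' → d t ∣ d t' := by
    intro t t' h
    exact Nat.dvd_gcd (Nat.gcd_dvd_left _ _)
      (dvd_trans (Nat.gcd_dvd_right _ _) (hMdvd _ _ h))
  -- take T attaining the supremum of d
  have hbdd : BddAbove (Set.range d) := ⟨m, by rintro _ ⟨t, rfl⟩; exact hdle t⟩
  obtain ⟨T, hT⟩ : sSup (Set.range d) ∈ Set.range d :=
    Nat.sSup_mem ⟨d 0, ⟨0, rfl⟩⟩ hbdd
  have hstab : ∀ t, T ≤ t → d t = d T := by
    intro t ht
    have h1 : d T ∣ d t := hddvd _ _ ht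
    have h2 : d t ≤ d T := by
      rw [hT]; exact le_csSup hbdd ⟨t, rfl⟩
    exact Nat.dvd_antisymm (Nat.dvd_of_mod_eq_zero (by
      have := Nat.le_antisymm h2 (Nat.le_of_dvd (hdpos t) h1)
      simp [this])) h1
  -- g ^ d T is in every Q j
  have hall : ∀ j, g ^ d T ∈ Q j := by
    intro j
    have h1 : g ^ d T ∈ Q (i + max j T) := by
      rw [← hstab (max j T) (le_max_right _ _)]
      exact hB (max j T)
    exact hdesc' j (i + max j T) (le_trans (le_max_left j T) (Nat.le_add_left _ _)) h1
  have : g ^ d T ∈ (⨅ j, Q j) := Subgroup.mem_iInf.mpr hall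
  rw [hint, Subgroup.mem_bot] at this
  have hmd : m ∣ d T := orderOf_dvd_of_pow_eq_one this
  exact ⟨T, dvd_trans hmd (Nat.gcd_dvd_right _ _)⟩

/-- Let π = (p_i) be pairwise distinct primes and Q a periodic π-graded group
with series (Q_i). Then for any normal subgroup N of Q, the images of the Q_i in Q/N form a
normal series with trivial intersection whose quotients are trivial or abelian of exponent
p_i; i.e., Q/N is π-graded. (p is 1-indexed; p 0 is unused.) -/
theorem stmt_16 {G : Type*} [Group G] (p : ℕ → ℕ)
    (hp : ∀ i, 1 ≤ i → (p i).Prime) (hdist : ∀ i j, 1 ≤ i → 1 ≤ j → p i = p j → i = j)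
    (hper : ∀ x : G, IsOfFinOrder x)
    (Q : ℕ → Subgroup G)
    (hQ0 : Q 0 = ⊤) (hnorm : ∀ i, (Q i).Normal) (hdesc : ∀ i, Q (i + 1) ≤ Q i)
    (hint : (⨅ i, Q i) = ⊥)
    (hcomm : ∀ i, ∀ x ∈ Q i, ∀ y ∈ Q i, x * y * x⁻¹ * y⁻¹ ∈ Q (i + 1))
    (hpow : ∀ i, ∀ x ∈ Q i, x ^ p (i + 1) ∈ Q (i + 1))
    (N : Subgroup G) [N.Normal] :
    (Q 0).map (QuotientGroup.mk' N) = ⊤ ∧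
      (∀ i, ((Q i).map (QuotientGroup.mk' N)).Normal) ∧
      (∀ i, (Q (i + 1)).map (QuotientGroup.mk' N) ≤ (Q i).map (QuotientGroup.mk' N)) ∧
      (⨅ i, (Q i).map (QuotientGroup.mk' N)) = ⊥ ∧
      (∀ i, ∀ x ∈ (Q i).map (QuotientGroup.mk' N), ∀ y ∈ (Q i).map (QuotientGroup.mk' N),
        x * y * x⁻¹ * y⁻¹ ∈ (Q (i + 1)).map (QuotientGroup.mk' N)) ∧
      (∀ i, ∀ x ∈ (Q i).map (QuotientGroup.mk' N),
        x ^ p (i + 1) ∈ (Q (i + 1)).map (QuotientGroup.mk' N)) := by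
  have hsurj := QuotientGroup.mk'_surjective N
  refine ⟨?_, ?_, ?_, ?_, ?_, ?_⟩
  · rw [hQ0, Subgroup.map_top_of_surjective _ hsurj]
  · exact fun i => Subgroup.Normal.map (hnorm i) _ hsurj
  · exact fun i => Subgroup.map_mono (hdesc i)
  · -- trivial intersection
    rw [eq_bot_iff]
    intro x hx
    simp only [Subgroup.mem_iInf] at hx
    rw [Subgroup.mem_bot]
    by_contra hx1
    -- x has finite order
    obtain ⟨g0, _, hg0⟩ := Subgroup.mem_map.mp (hx 0)
    have hfin : IsOfFinOrder x := by
      rw [← hg0]; exact MonoidHom.isOfFinOrder (QuotientGroup.mk' N) (hper g0)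
    set n := orderOf x with hn
    have hn1 : n ≠ 1 := fun h => hx1 (orderOf_eq_one_iff.mp h)
    set q := n.minFac with hq
    have hqprime : q.Prime := Nat.minFac_prime hn1
    have hqn : q ∣ n := Nat.minFac_dvd n
    -- pick i with ∀ k > i, p k ≠ q
    obtain ⟨i, hi⟩ : ∃ i, ∀ k, i < k → p k ≠ q := by
      by_cases h : ∃ k, 1 ≤ k ∧ p k = q
      · obtain ⟨k, hk1, hkq⟩ := h
        refine ⟨k, fun k' hk' hk'q => ?_⟩
        have := hdist k' k (le_trans hk1 (le_of_lt hk')) hk1 (hk'q.trans hkq.symm)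
        omega
      · exact ⟨0, fun k hk hkq => h ⟨k, hk, hkq⟩⟩
    obtain ⟨g, hg, hgx⟩ := Subgroup.mem_map.mp (hx i)
    have hm : 0 < orderOf g := (hper g).orderOf_pos
    have hnm : n ∣ orderOf g := by
      apply orderOf_dvd_of_pow_eq_one
      rw [← hgx, ← map_pow, pow_orderOf_eq_one, map_one]
    obtain ⟨T, hT⟩ := stmt16_key p Q hdesc hint hpow hg hm
    have hqprod : q ∣ ∏ s ∈ Finset.range T, p (i + 1 + s) :=
      dvd_trans (dvd_trans hqn hnm) hT
    obtain ⟨s, hs, hqs⟩ := hqprime.prime.exists_mem_finset_dvd hqprod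
    have hps : (p (i + 1 + s)).Prime := hp _ (by omega)
    have : q = p (i + 1 + s) := (Nat.prime_dvd_prime_iff_eq hqprime hps).mp hqs
    exact hi (i + 1 + s) (by omega) this.symm
  · intro i x hx y hy
    obtain ⟨a, ha, rfl⟩ := Subgroup.mem_map.mp hx
    obtain ⟨b, hb, rfl⟩ := Subgroup.mem_map.mp hy
    exact ⟨a * b * a⁻¹ * b⁻¹, hcomm i a ha b hb, by simp⟩
  · intro i x hx
    obtain ⟨a, ha, rfl⟩ := Subgroup.mem_map.mp hx
    exact ⟨a ^ p (i + 1), hpow i a ha, by simp⟩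
end
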